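/- Let a, b ∈ ℝ and σ > 0. Then for every s ≥ 0, the product measure N(a, σ²) ⊗ N(b, σ²) satisfies (N(a, σ²) ⊗ N(b, σ²)){(x, y) : x² + y² > s} = Q₁(√(a² + b²)/σ, √s/σ). -/

import Mathlib

open MeasureTheory ProbabilityTheory

/-- The modified Bessel function of the first kind of order zero,
`I₀(x) = ∑_{k=0}^∞ (x/2)^(2k) / (k!)²`. -/
noncomputable def besselI0 (x : ℝ) : ℝ :=
  ∑' k : ℕ, (x / 2) ^ (2 * k) / ((Nat.factorial k : ℝ)) ^ 2

/-- The first-order Marcum Q-function, `Q₁(α, β) = ∫_β^∞ x e^{-(x²+α²)/2} I₀(αx) dx`. -/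
noncomputable def marcumQ1 (α β : ℝ) : ℝ :=
  ∫ x in Set.Ici β, x * Real.exp (-(x ^ 2 + α ^ 2) / 2) * besselI0 (α * x)

/-!
Rescaling by `σ` reduces everything to unit variance. There the product density in polar
coordinates `(r, θ)` is `(2π)⁻¹ e^{-(r² + c²)/2} e^{r (a cos θ + b sin θ)}` with `c = √(a² + b²)`.
Shifting `θ` by the argument of `a + b i` turns the angular integral into
`∫_{-π}^{π} e^{c r cos θ} dθ`, which is `2π I₀(c r)` by expanding the exponential and using
Wallis' integrals; what remains is the radial integral defining `Q₁`.
-/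

open Real Set intervalIntegral
open scoped Nat NNReal ENNReal

lemma hasSum_besselI0 (x : ℝ) :
    HasSum (fun k : ℕ => (x / 2) ^ (2 * k) / (k ! : ℝ) ^ 2) (besselI0 x) := by
  refine Summable.hasSum <| (summable_pow_div_factorial (x ^ 2 / 4)).of_nonneg_of_le
    (fun k => by rw [pow_mul]; positivity) fun k => ?_
  have hk : (1 : ℝ) ≤ k ! := mod_cast k.factorial_pos
  rw [pow_mul, div_pow, show (2 : ℝ) ^ 2 = 4 by norm_num]
  exact div_le_div_of_nonneg_left (by positivity) (by positivity) (by nlinarith)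

lemma besselI0_nonneg (x : ℝ) : 0 ≤ besselI0 x :=
  (hasSum_besselI0 x).nonneg fun k => by rw [pow_mul]; positivity

lemma prod_range_two_mul_add_one_div_two_mul_add_two (k : ℕ) :
    ∏ i ∈ Finset.range k, (2 * (i : ℝ) + 1) / (2 * i + 2) =
      (2 * k)! / (4 ^ k * (k ! : ℝ) ^ 2) := by
  induction k with
  | zero => simp
  | succ k ih =>
    rw [Finset.prod_range_succ, ih, show 2 * (k + 1) = 2 * k + 1 + 1 by ring]
    push_cast [Nat.factorial_succ]
    field_simp
    ring

lemma integral_cos_pow_eq_mul_integral_sin_pow (n : ℕ) :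
    ∫ x in -π..π, cos x ^ n = (1 + (-1) ^ n) * ∫ x in 0..π, sin x ^ n := by
  have hper : Function.Periodic (fun x => sin x ^ n) (2 * π) := fun x => by
    simp [sin_periodic x]
  have hshift : ∫ x in -π..π, cos x ^ n = ∫ x in -π..π, sin x ^ n := by
    simp_rw [← sin_add_pi_div_two]
    rw [integral_comp_add_right (fun x => sin x ^ n),
      show π + π / 2 = -π + π / 2 + 2 * π by ring, hper.intervalIntegral_add_eq (-π + π / 2) (-π),
      show -π + 2 * π = π by ring]
  have hleft : ∫ x in -π..0, sin x ^ n = (-1) ^ n * ∫ x in 0..π, sin x ^ n := by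
    have := integral_comp_sub_right (fun x => sin x ^ n) π (a := 0) (b := π)
    simp only [sin_sub_pi, neg_pow (sin _), intervalIntegral.integral_const_mul, zero_sub,
      sub_self] at this
    exact this.symm
  have hint (a b : ℝ) : IntervalIntegrable (fun x => sin x ^ n) volume a b :=
    (continuous_sin.pow n).intervalIntegrable _ _
  rw [hshift, ← integral_add_adjacent_intervals (hint (-π) 0) (hint 0 π), hleft]
  ring

lemma integral_cos_pow_two_mul (k : ℕ) :
    ∫ x in -π..π, cos x ^ (2 * k) = 2 * π * ((2 * k)! / (4 ^ k * (k ! : ℝ) ^ 2)) := by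
  rw [integral_cos_pow_eq_mul_integral_sin_pow, integral_sin_pow_even,
    prod_range_two_mul_add_one_div_two_mul_add_two, pow_mul]
  norm_num
  ring

lemma integral_cos_pow_two_mul_add_one (k : ℕ) : ∫ x in -π..π, cos x ^ (2 * k + 1) = 0 := by
  rw [integral_cos_pow_eq_mul_integral_sin_pow, pow_succ, pow_mul]
  norm_num

lemma hasSum_integral_exp_mul_cos (z : ℝ) :
    HasSum (fun n : ℕ => z ^ n / n ! * ∫ θ in -π..π, cos θ ^ n)
      (∫ θ in -π..π, exp (z * cos θ)) := by
  simp_rw [← intervalIntegral.integral_const_mul]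
  refine intervalIntegral.hasSum_integral_of_dominated_convergence (fun n _ => |z| ^ n / n !)
    (fun n => by fun_prop) (fun n => .of_forall fun θ _ => ?_)
    (.of_forall fun _ _ => summable_pow_div_factorial |z|) intervalIntegrable_const
    (.of_forall fun θ _ => ?_)
  · rw [norm_mul, norm_div, norm_pow, norm_pow, Real.norm_natCast, Real.norm_eq_abs,
      Real.norm_eq_abs, mul_comm, mul_div_assoc', ← mul_pow]
    gcongr
    exact mul_le_of_le_one_left (abs_nonneg z) (abs_cos_le_one θ)
  · simpa only [div_mul_eq_mul_div, mul_pow, exp_eq_exp_ℝ]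
      using NormedSpace.expSeries_div_hasSum_exp (z * cos θ)

lemma integral_exp_mul_cos (z : ℝ) : ∫ θ in -π..π, exp (z * cos θ) = 2 * π * besselI0 z := by
  set f : ℕ → ℝ := fun n => z ^ n / n ! * ∫ θ in -π..π, cos θ ^ n
  have heven : HasSum (fun k => f (2 * k)) (2 * π * besselI0 z) := by
    refine ((hasSum_besselI0 z).mul_left (2 * π)).congr_fun fun k => ?_
    simp only [f]
    rw [integral_cos_pow_two_mul, div_pow, pow_mul (2 : ℝ)]
    have : ((2 * k)! : ℝ) ≠ 0 := by positivity
    field_simp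
    ring
  have hodd : HasSum (fun k => f (2 * k + 1)) 0 := by
    simp only [f, integral_cos_pow_two_mul_add_one, mul_zero, hasSum_zero]
  have := (hasSum_integral_exp_mul_cos z).unique (heven.even_add_odd hodd)
  rwa [add_zero] at this

lemma integral_exp_mul_cos_add_mul_sin (u w : ℝ) :
    ∫ θ in -π..π, exp (u * cos θ + w * sin θ) = 2 * π * besselI0 √(u ^ 2 + w ^ 2) := by
  set ζ : ℂ := ⟨u, w⟩
  set θ₀ := ζ.arg
  have hc : ‖ζ‖ = √(u ^ 2 + w ^ 2) := Complex.norm_eq_sqrt_sq_add_sq ζ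
  have hphase (θ : ℝ) : u * cos θ + w * sin θ = ‖ζ‖ * cos (θ - θ₀) := by
    have hu : ‖ζ‖ * cos θ₀ = u := Complex.norm_mul_cos_arg ζ
    have hw : ‖ζ‖ * sin θ₀ = w := Complex.norm_mul_sin_arg ζ
    rw [cos_sub, ← hu, ← hw]
    ring
  have hper : Function.Periodic (fun θ => exp (‖ζ‖ * cos θ)) (2 * π) := fun θ => by
    simp [cos_periodic θ]
  simp_rw [hphase]
  rw [integral_comp_sub_right (fun θ => exp (‖ζ‖ * cos θ)),
    show π - θ₀ = -π - θ₀ + 2 * π by ring, hper.intervalIntegral_add_eq (-π - θ₀) (-π),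
    show -π + 2 * π = π by ring, integral_exp_mul_cos, hc]

@[fun_prop]
lemma continuous_besselI0 : Continuous besselI0 := by
  have h : besselI0 = fun z => (2 * π)⁻¹ * ∫ θ in -π..π, exp (z * cos θ) := by
    ext z
    rw [integral_exp_mul_cos, inv_mul_cancel_left₀ (by positivity)]
  rw [h]
  exact continuous_const.mul
    (continuous_parametric_intervalIntegral_of_continuous' (by fun_prop) _ _)

lemma lintegral_eq_lintegral_polar {f : ℝ × ℝ → ℝ≥0∞} (hf : Measurable f) :
    ∫⁻ p, f p =
      ∫⁻ r in Ioi 0, ∫⁻ θ in Ioo (-π) π, ENNReal.ofReal r * f (r * cos θ, r * sin θ) := by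
  rw [← lintegral_comp_polarCoord_symm, show polarCoord.target = Ioi 0 ×ˢ Ioo (-π) π from rfl,
    Measure.volume_eq_prod, ← Measure.prod_restrict, lintegral_prod]
  · rfl
  · exact (measurable_fst.ennreal_ofReal.smul (hf.comp continuous_polarCoord_symm.measurable))
      |>.aemeasurable

lemma gaussianReal_prod_eq_withDensity (a b : ℝ) {v w : ℝ≥0} (hv : v ≠ 0) (hw : w ≠ 0) :
    (gaussianReal a v).prod (gaussianReal b w) =
      volume.withDensity fun p => gaussianPDF a v p.1 * gaussianPDF b w p.2 := by
  refine Measure.prod_eq fun s t hs ht => ?_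
  rw [withDensity_apply _ (hs.prod ht), Measure.volume_eq_prod, ← Measure.prod_restrict,
    lintegral_prod_mul (measurable_gaussianPDF a v).aemeasurable
      (measurable_gaussianPDF b w).aemeasurable,
    gaussianReal_apply _ hv s, gaussianReal_apply _ hw t]

lemma gaussianReal_prod_map_const_mul (a b c : ℝ) (v : ℝ≥0) :
    ((gaussianReal a v).prod (gaussianReal b v)).map (Prod.map (c * ·) (c * ·)) =
      (gaussianReal (c * a) (.mk (c ^ 2) (sq_nonneg c) * v)).prod
        (gaussianReal (c * b) (.mk (c ^ 2) (sq_nonneg c) * v)) := by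
  rw [← gaussianReal_map_const_mul, ← gaussianReal_map_const_mul,
    Measure.map_prod_map _ _ (measurable_const_mul c) (measurable_const_mul c)]

lemma gaussianPDFReal_mul_gaussianPDFReal_polar (a b r θ : ℝ) :
    gaussianPDFReal a 1 (r * cos θ) * gaussianPDFReal b 1 (r * sin θ) =
      (2 * π)⁻¹ * exp (-(r ^ 2 + (a ^ 2 + b ^ 2)) / 2) * exp (r * a * cos θ + r * b * sin θ) := by
  have hsq : (√(2 * π))⁻¹ * (√(2 * π))⁻¹ = (2 * π)⁻¹ := by
    rw [← mul_inv, mul_self_sqrt (by positivity)]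
  simp only [gaussianPDFReal, NNReal.coe_one, mul_one]
  rw [mul_mul_mul_comm, hsq, mul_assoc, ← exp_add, ← exp_add]
  congr 2
  linear_combination (-r ^ 2 / 2) * sin_sq_add_cos_sq θ

lemma lintegral_gaussianPDF_mul_gaussianPDF_polar (a b : ℝ) {r : ℝ} (hr : 0 ≤ r) :
    ∫⁻ θ in Ioo (-π) π, gaussianPDF a 1 (r * cos θ) * gaussianPDF b 1 (r * sin θ) =
      ENNReal.ofReal (exp (-(r ^ 2 + (a ^ 2 + b ^ 2)) / 2) * besselI0 (√(a ^ 2 + b ^ 2) * r)) := by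
  simp only [gaussianPDF, ← ENNReal.ofReal_mul (gaussianPDFReal_nonneg _ _ _),
    gaussianPDFReal_mul_gaussianPDFReal_polar]
  have hint : IntegrableOn (fun θ => (2 * π)⁻¹ * exp (-(r ^ 2 + (a ^ 2 + b ^ 2)) / 2) *
      exp (r * a * cos θ + r * b * sin θ)) (Ioo (-π) π) :=
    (Continuous.integrableOn_Icc (by fun_prop)).mono_set Ioo_subset_Icc_self
  rw [← ofReal_integral_eq_lintegral_ofReal hint (.of_forall fun θ => by positivity),
    MeasureTheory.integral_const_mul, ← integral_Ioc_eq_integral_Ioo,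
    ← integral_of_le (by linarith [pi_pos]), integral_exp_mul_cos_add_mul_sin,
    show (r * a) ^ 2 + (r * b) ^ 2 = r ^ 2 * (a ^ 2 + b ^ 2) by ring,
    sqrt_mul (sq_nonneg r), sqrt_sq hr, mul_comm r]
  field_simp

lemma measurableSet_sq_add_sq_gt (s : ℝ) : MeasurableSet {p : ℝ × ℝ | p.1 ^ 2 + p.2 ^ 2 > s} :=
  measurableSet_lt measurable_const (by fun_prop)

lemma gaussianReal_one_prod_measure_sq_add_sq_gt (a b s : ℝ) :
    ((gaussianReal a 1).prod (gaussianReal b 1)) {p : ℝ × ℝ | p.1 ^ 2 + p.2 ^ 2 > s} =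
      ENNReal.ofReal (marcumQ1 √(a ^ 2 + b ^ 2) √s) := by
  set g : ℝ → ℝ := fun r =>
    r * exp (-(r ^ 2 + √(a ^ 2 + b ^ 2) ^ 2) / 2) * besselI0 (√(a ^ 2 + b ^ 2) * r)
  have hmem {r : ℝ} (hr : 0 < r) (θ : ℝ) :
      (r * cos θ, r * sin θ) ∈ {p : ℝ × ℝ | p.1 ^ 2 + p.2 ^ 2 > s} ↔ √s < r := by
    rw [sqrt_lt' hr]
    simp only [mem_ofPred_eq, mul_pow, ← mul_add, cos_sq_add_sin_sq, mul_one, gt_iff_lt]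
  have hradial : (gaussianReal a 1).prod (gaussianReal b 1) {p : ℝ × ℝ | p.1 ^ 2 + p.2 ^ 2 > s} =
      ∫⁻ r in Ioi √s, .ofReal (g r) := by
    have hS := measurableSet_sq_add_sq_gt s
    rw [gaussianReal_prod_eq_withDensity a b one_ne_zero one_ne_zero, withDensity_apply _ hS,
      ← lintegral_indicator hS, lintegral_eq_lintegral_polar (.indicator (by fun_prop) hS),
      ← inter_eq_left.2 (Ioi_subset_Ioi (sqrt_nonneg s)),
      ← setLIntegral_indicator measurableSet_Ioi]
    refine setLIntegral_congr_fun measurableSet_Ioi fun r (hr : 0 < r) => ?_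
    by_cases hrs : √s < r
    · simp only [indicator, hmem hr, hrs, mem_Ioi, if_true]
      rw [lintegral_const_mul _ (by fun_prop),
        lintegral_gaussianPDF_mul_gaussianPDF_polar a b hr.le, ← ENNReal.ofReal_mul hr.le]
      simp only [g]
      rw [sq_sqrt (by positivity)]
      ring_nf
    · simp [indicator, hmem hr, hrs]
  have hg : 0 ≤ᵐ[volume.restrict (Ioi √s)] g :=
    (ae_restrict_iff' measurableSet_Ioi).2 <| .of_forall fun r hr =>
      mul_nonneg (mul_nonneg ((sqrt_nonneg s).trans hr.le) (exp_pos _).le) (besselI0_nonneg _)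
  -- finiteness of the radial integral comes for free: it is the measure of a set
  rw [hradial, marcumQ1, integral_Ici_eq_integral_Ioi, integral_eq_lintegral_of_nonneg_ae hg
    (by fun_prop), ENNReal.ofReal_toReal (hradial ▸ measure_ne_top _ _)]

theorem noncentral_chiSq_two_survival_general (a b σ : ℝ) (hσ : 0 < σ) (s : ℝ) :
    ((gaussianReal a (σ ^ 2).toNNReal).prod (gaussianReal b (σ ^ 2).toNNReal))
        {p : ℝ × ℝ | p.1 ^ 2 + p.2 ^ 2 > s} =
      ENNReal.ofReal (marcumQ1 (Real.sqrt (a ^ 2 + b ^ 2) / σ) (Real.sqrt s / σ)) := by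
  have hvar : .mk (σ⁻¹ ^ 2) (sq_nonneg _) * (σ ^ 2).toNNReal = 1 := by
    ext
    simp [sq_nonneg, hσ.ne']
  have hpre : Prod.map (σ⁻¹ * ·) (σ⁻¹ * ·) ⁻¹' {p : ℝ × ℝ | p.1 ^ 2 + p.2 ^ 2 > s / σ ^ 2} =
      {p : ℝ × ℝ | p.1 ^ 2 + p.2 ^ 2 > s} := by
    ext p
    simp only [mem_preimage, Prod.map, mem_ofPred_eq, gt_iff_lt, mul_pow, inv_pow, ← mul_add,
      div_eq_inv_mul]
    exact mul_lt_mul_iff_right₀ (by positivity)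
  rw [← hpre, ← Measure.map_apply (by fun_prop) (measurableSet_sq_add_sq_gt _),
    gaussianReal_prod_map_const_mul, hvar, gaussianReal_one_prod_measure_sq_add_sq_gt,
    mul_pow, mul_pow, ← mul_add, sqrt_mul (sq_nonneg _), sqrt_sq (inv_nonneg.2 hσ.le),
    sqrt_div' _ (sq_nonneg σ), sqrt_sq hσ.le, inv_mul_eq_div]

/-- Survival function of the scaled noncentral χ²(2) statistic: for `s ≥ 0`,
`(N(a,σ²) ⊗ N(b,σ²)){(x,y) : x² + y² > s} = Q₁(√(a²+b²)/σ, √s/σ)`. -/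
theorem noncentral_chiSq_two_survival (a b σ : ℝ) (hσ : 0 < σ) (s : ℝ) (hs : 0 ≤ s) :
    ((gaussianReal a (σ ^ 2).toNNReal).prod (gaussianReal b (σ ^ 2).toNNReal))
        {p : ℝ × ℝ | p.1 ^ 2 + p.2 ^ 2 > s} =
      ENNReal.ofReal (marcumQ1 (Real.sqrt (a ^ 2 + b ^ 2) / σ) (Real.sqrt s / σ)) :=
  noncentral_chiSq_two_survival_general a b σ hσ s
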